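/- Let (H,R) be a braided bialgebra over a field k possessing an invertible central element θ with Δ(θ) = (R·R_21)^{-1}·(θ⊗θ), and let f : H → k be a character. Then the element K'' = (f⊗id)(R·R_21) ∈ H satisfies the reflection equation (K''⊗1)·R·(1⊗K'')·R_21 = R·(1⊗K'')·R_21·(K''⊗1) in H⊗H. -/

import Mathlib

/- Braided bialgebras: basic tensor-leg maps and the universal R-matrix axioms. -/

open scoped TensorProduct

noncomputable section

variable (k H : Type*) [Field k] [Ring H] [Bialgebra k H]

/-- The flip `a ⊗ b ↦ b ⊗ a` on `H ⊗[k] H`, as an algebra homomorphism. -/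
def tflip : H ⊗[k] H →ₐ[k] H ⊗[k] H := (Algebra.TensorProduct.comm k H H).toAlgHom

/-- `s ⊗ t ↦ s ⊗ t ⊗ 1 : H ⊗ H → H ⊗ H ⊗ H`. -/
def leg12 : H ⊗[k] H →ₐ[k] H ⊗[k] (H ⊗[k] H) :=
  Algebra.TensorProduct.map (AlgHom.id k H) Algebra.TensorProduct.includeLeft

/-- `s ⊗ t ↦ s ⊗ 1 ⊗ t : H ⊗ H → H ⊗ H ⊗ H`. -/
def leg13 : H ⊗[k] H →ₐ[k] H ⊗[k] (H ⊗[k] H) :=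
  Algebra.TensorProduct.map (AlgHom.id k H) Algebra.TensorProduct.includeRight

/-- `s ⊗ t ↦ 1 ⊗ s ⊗ t : H ⊗ H → H ⊗ H ⊗ H`. -/
def leg23 : H ⊗[k] H →ₐ[k] H ⊗[k] (H ⊗[k] H) :=
  Algebra.TensorProduct.includeRight

/-- `Δ ⊗ id : H ⊗ H → H ⊗ H ⊗ H`. -/
def comulLeft : H ⊗[k] H →ₐ[k] H ⊗[k] (H ⊗[k] H) :=
  (Algebra.TensorProduct.assoc k k k H H H).toAlgHom.comp
    (Algebra.TensorProduct.map (Bialgebra.comulAlgHom k H) (AlgHom.id k H))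

/-- `id ⊗ Δ : H ⊗ H → H ⊗ H ⊗ H`. -/
def comulRight : H ⊗[k] H →ₐ[k] H ⊗[k] (H ⊗[k] H) :=
  Algebra.TensorProduct.map (AlgHom.id k H) (Bialgebra.comulAlgHom k H)

/-- `(H, R)` is a braided bialgebra with `R⁻¹ = Rinv`:  `R` is an invertible element of
`H ⊗ H` satisfying `Δ(x) · R = R · Δ^op(x)` for all `x` and the two hexagon identities
`(Δ ⊗ id)(R) = R₂₃ · R₁₃` and `(id ⊗ Δ)(R) = R₁₂ · R₁₃`. -/
def IsUniversalRMatrix (R Rinv : H ⊗[k] H) : Prop :=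
  R * Rinv = 1 ∧ Rinv * R = 1 ∧
  (∀ x : H, Bialgebra.comulAlgHom k H x * R = R * tflip k H (Bialgebra.comulAlgHom k H x)) ∧
  comulLeft k H R = leg23 k H R * leg13 k H R ∧
  comulRight k H R = leg12 k H R * leg13 k H R

/-- `ψ ⊗ id : H ⊗ H → H`, `a ⊗ b ↦ ψ(a) • b`. -/
def dualTensorId (ψ : H →ₗ[k] k) : H ⊗[k] H →ₗ[k] H :=
  (TensorProduct.lid k H).toLinearMap.comp (TensorProduct.map ψ LinearMap.id)


/-!
Apply the algebra map `f ⊗ id ⊗ id : H ⊗ H ⊗ H → H ⊗ H`. Because `f` is a character it sends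
`R₁₂R₂₁ ↦ K ⊗ 1`, `R₁₃R₃₁ ↦ 1 ⊗ K`, `R₂₃ ↦ R` and `R₃₂ ↦ R₂₁`, so it suffices to prove
`R₁₂R₂₁ · R₂₃ · R₁₃R₃₁ · R₃₂ = R₂₃ · R₁₃R₃₁ · R₃₂ · R₁₂R₂₁` in `H ⊗ H ⊗ H`. Regrouping, this
follows from four Yang–Baxter type relations
`R₂₃R₁₃R₁₂ = R₁₂R₁₃R₂₃`, `R₁₃R₂₃R₂₁ = R₂₁R₂₃R₁₃`, `R₃₁R₃₂R₁₂ = R₁₂R₃₂R₃₁`, `R₂₁R₃₁R₃₂ = R₃₂R₃₁R₂₁`.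
The first two come from the hexagon identity for `(Δ ⊗ id)(R)` and the intertwining relations
`Δ(x)R = RΔᵒᵖ(x)`, `Δᵒᵖ(x)R₂₁ = R₂₁Δ(x)` on the legs `12`; the last two are the images, under
the reversal `x ⊗ y ⊗ z ↦ z ⊗ y ⊗ x` of the legs, of `R₁₃R₁₂R₃₂ = R₃₂R₁₂R₁₃` (which comes in
the same way from `(id ⊗ Δ)(R)` on the legs `23`) and of the first one.
-/

open Algebra.TensorProduct (assoc leftComm map)

theorem reflection_of_exchange {T : Type*} [Semigroup T] {a a' b b' c c' : T}
    (h1 : c * b * a = a * b * c) (h0 : b' * c' * a = a * c' * b')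
    (h2 : b * c * a' = a' * c * b) (h3 : a' * b' * c' = c' * b' * a') :
    a * a' * c * (b * b') * c' = c * (b * b') * c' * (a * a') :=
  calc a * a' * c * (b * b') * c'
      = a * (a' * c * b) * (b' * c') := by simp only [mul_assoc]
    _ = a * (b * c * a') * (b' * c') := by rw [h2]
    _ = a * b * c * (a' * b' * c') := by simp only [mul_assoc]
    _ = a * b * c * (c' * b' * a') := by rw [h3]
    _ = c * b * a * (c' * b' * a') := by rw [h1]
    _ = c * b * (a * c' * b') * a' := by simp only [mul_assoc]
    _ = c * b * (b' * c' * a) * a' := by rw [h0]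
    _ = c * (b * b') * c' * (a * a') := by simp only [mul_assoc]

section TensorProduct

variable {R A B C : Type*} [CommSemiring R] [Semiring A] [Semiring B] [Semiring C]
  [Algebra R A] [Algebra R B] [Algebra R C]

theorem Algebra.TensorProduct.map_mul_tmul_one_of_intertwines {φ ψ : A →ₐ[R] C} {s : C}
    (h : ∀ x, φ x * s = s * ψ x) (y : A ⊗[R] B) :
    map φ (AlgHom.id R B) y * (s ⊗ₜ 1) = (s ⊗ₜ 1) * map ψ (AlgHom.id R B) y := by
  induction y using TensorProduct.induction_on with
  | zero => simp
  | tmul a b => simp [h]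
  | add y z hy hz => simp only [map_add, add_mul, mul_add, hy, hz]

theorem Algebra.TensorProduct.map_mul_one_tmul_of_intertwines {φ ψ : A →ₐ[R] C} {s : C}
    (h : ∀ x, φ x * s = s * ψ x) (y : B ⊗[R] A) :
    map (AlgHom.id R B) φ y * (1 ⊗ₜ s) = (1 ⊗ₜ s) * map (AlgHom.id R B) ψ y := by
  induction y using TensorProduct.induction_on with
  | zero => simp
  | tmul a b => simp [h]
  | add y z hy hz => simp only [map_add, add_mul, mul_add, hy, hz]

theorem Algebra.TensorProduct.leftComm_assoc_apply (z : (A ⊗[R] B) ⊗[R] C) :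
    leftComm R A B C (assoc R R R A B C z)
      = assoc R R R B A C (map (Algebra.TensorProduct.comm R A B).toAlgHom (AlgHom.id R C) z) := by
  simp [Algebra.TensorProduct.leftComm]

def charTensorId (f : A →ₐ[R] R) : A ⊗[R] B →ₐ[R] B :=
  (Algebra.TensorProduct.lid R B).toAlgHom.comp (map f (AlgHom.id R B))

@[simp]
theorem charTensorId_tmul (f : A →ₐ[R] R) (a : A) (b : B) :
    charTensorId f (a ⊗ₜ[R] b) = f a • b := rfl

end TensorProduct

section Legs

variable {k H}

theorem tflip_tflip (y : H ⊗[k] H) : tflip k H (tflip k H y) = y :=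
  (Algebra.TensorProduct.comm k H H).symm_apply_apply y

theorem leg23_apply (y : H ⊗[k] H) : leg23 k H y = 1 ⊗ₜ y := rfl

theorem leg12_eq_assoc (y : H ⊗[k] H) : leg12 k H y = assoc k k k H H H (y ⊗ₜ 1) := by
  induction y using TensorProduct.induction_on <;> simp_all [leg12, TensorProduct.add_tmul]

theorem comulLeft_apply (y : H ⊗[k] H) :
    comulLeft k H y = assoc k k k H H H (map (Bialgebra.comulAlgHom k H) (AlgHom.id k H) y) :=
  rfl

theorem comulRight_apply (y : H ⊗[k] H) :
    comulRight k H y = map (AlgHom.id k H) (Bialgebra.comulAlgHom k H) y := rfl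

theorem leftComm_leg13 (y : H ⊗[k] H) : leftComm k H H H (leg13 k H y) = leg23 k H y := by
  induction y using TensorProduct.induction_on <;>
    simp_all [leg13, leg23, TensorProduct.tmul_add]

theorem leftComm_leg23 (y : H ⊗[k] H) : leftComm k H H H (leg23 k H y) = leg13 k H y := by
  induction y using TensorProduct.induction_on <;>
    simp_all [leg13, leg23, TensorProduct.tmul_add]

theorem map_tflip_leg12 (y : H ⊗[k] H) :
    map (AlgHom.id k H) (tflip k H) (leg12 k H y) = leg13 k H y := by
  induction y using TensorProduct.induction_on <;> simp_all [leg12, leg13, tflip]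

theorem map_tflip_leg13 (y : H ⊗[k] H) :
    map (AlgHom.id k H) (tflip k H) (leg13 k H y) = leg12 k H y := by
  induction y using TensorProduct.induction_on <;> simp_all [leg12, leg13, tflip]

theorem leftComm_comulLeft (y : H ⊗[k] H) :
    leftComm k H H H (comulLeft k H y)
      = assoc k k k H H H
          (map ((tflip k H).comp (Bialgebra.comulAlgHom k H)) (AlgHom.id k H) y) := by
  rw [← AlgHom.comp_id (AlgHom.id k H), Algebra.TensorProduct.map_comp]
  exact Algebra.TensorProduct.leftComm_assoc_apply _

theorem map_tflip_comulRight (y : H ⊗[k] H) :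
    map (AlgHom.id k H) (tflip k H) (comulRight k H y)
      = map (AlgHom.id k H) ((tflip k H).comp (Bialgebra.comulAlgHom k H)) y := by
  rw [Algebra.TensorProduct.map_id_comp]
  rfl

theorem assoc_map_mul_leg12 {δ₁ δ₂ : H →ₐ[k] H ⊗[k] H} {S : H ⊗[k] H}
    (h : ∀ x, δ₁ x * S = S * δ₂ x) (y : H ⊗[k] H) :
    assoc k k k H H H (map δ₁ (AlgHom.id k H) y) * leg12 k H S
      = leg12 k H S * assoc k k k H H H (map δ₂ (AlgHom.id k H) y) := by
  rw [leg12_eq_assoc, ← map_mul, ← map_mul,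
    Algebra.TensorProduct.map_mul_tmul_one_of_intertwines h]

def legReverse : H ⊗[k] (H ⊗[k] H) →ₐ[k] H ⊗[k] (H ⊗[k] H) :=
  (assoc k k k H H H).toAlgHom.comp
    ((Algebra.TensorProduct.comm k H (H ⊗[k] H)).toAlgHom.comp (map (AlgHom.id k H) (tflip k H)))

theorem legReverse_leg12 (y : H ⊗[k] H) :
    legReverse (leg12 k H y) = leg23 k H (tflip k H y) := by
  induction y using TensorProduct.induction_on <;>
    simp_all [legReverse, leg12, leg23, tflip, TensorProduct.tmul_add]

theorem legReverse_leg13 (y : H ⊗[k] H) :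
    legReverse (leg13 k H y) = leg13 k H (tflip k H y) := by
  induction y using TensorProduct.induction_on <;> simp_all [legReverse, leg13, tflip]

theorem legReverse_leg23 (y : H ⊗[k] H) :
    legReverse (leg23 k H y) = leg12 k H (tflip k H y) := by
  induction y using TensorProduct.induction_on <;>
    simp_all [legReverse, leg12, leg23, tflip, TensorProduct.tmul_add]

theorem charTensorId_leg12 (f : H →ₐ[k] k) (y : H ⊗[k] H) :
    charTensorId f (leg12 k H y) = charTensorId f y ⊗ₜ[k] (1 : H) := by
  induction y using TensorProduct.induction_on with
  | zero => simp
  | tmul a b => simp [leg12, TensorProduct.smul_tmul']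
  | add y z hy hz => simp only [map_add, hy, hz, TensorProduct.add_tmul]

theorem charTensorId_leg13 (f : H →ₐ[k] k) (y : H ⊗[k] H) :
    charTensorId f (leg13 k H y) = (1 : H) ⊗ₜ[k] charTensorId f y := by
  induction y using TensorProduct.induction_on with
  | zero => simp
  | tmul a b => simp [leg13]
  | add y z hy hz => simp only [map_add, hy, hz, TensorProduct.tmul_add]

theorem charTensorId_leg23 (f : H →ₐ[k] k) (y : H ⊗[k] H) :
    charTensorId f (leg23 k H y) = y := by
  simp [leg23]

theorem dualTensorId_eq_charTensorId (f : H →ₐ[k] k) (y : H ⊗[k] H) :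
    dualTensorId k H f.toLinearMap y = charTensorId f y := by
  induction y using TensorProduct.induction_on with
  | zero => simp
  | tmul a b => simp [dualTensorId]
  | add y z hy hz => simp only [map_add, hy, hz]

end Legs

namespace IsUniversalRMatrix

variable {k H} {R Rinv : H ⊗[k] H}

theorem tflip_comul_mul_tflip (hR : IsUniversalRMatrix k H R Rinv) (x : H) :
    tflip k H (Bialgebra.comulAlgHom k H x) * tflip k H R
      = tflip k H R * Bialgebra.comulAlgHom k H x := by
  obtain ⟨-, -, hΔ, -, -⟩ := hR
  simpa only [map_mul, tflip_tflip] using congrArg (tflip k H) (hΔ x)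

theorem yangBaxter (hR : IsUniversalRMatrix k H R Rinv) :
    leg23 k H R * leg13 k H R * leg12 k H R = leg12 k H R * leg13 k H R * leg23 k H R := by
  obtain ⟨-, -, hΔ, hΔ₁, -⟩ := hR
  have h := assoc_map_mul_leg12 (δ₂ := (tflip k H).comp (Bialgebra.comulAlgHom k H)) hΔ R
  rw [← comulLeft_apply, ← leftComm_comulLeft, hΔ₁, map_mul, leftComm_leg23,
    leftComm_leg13] at h
  rw [h, mul_assoc]

theorem leg13_leg23_tflip_leg12 (hR : IsUniversalRMatrix k H R Rinv) :
    leg13 k H R * leg23 k H R * leg12 k H (tflip k H R)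
      = leg12 k H (tflip k H R) * leg23 k H R * leg13 k H R := by
  have h := assoc_map_mul_leg12 (δ₁ := (tflip k H).comp (Bialgebra.comulAlgHom k H))
    hR.tflip_comul_mul_tflip R
  obtain ⟨-, -, -, hΔ₁, -⟩ := hR
  rw [← comulLeft_apply, ← leftComm_comulLeft, hΔ₁, map_mul, leftComm_leg23,
    leftComm_leg13] at h
  rw [h, mul_assoc]

theorem leg13_leg12_tflip_leg23 (hR : IsUniversalRMatrix k H R Rinv) :
    leg13 k H R * leg12 k H R * leg23 k H (tflip k H R)
      = leg23 k H (tflip k H R) * leg12 k H R * leg13 k H R := by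
  have h := Algebra.TensorProduct.map_mul_one_tmul_of_intertwines
    (φ := (tflip k H).comp (Bialgebra.comulAlgHom k H)) hR.tflip_comul_mul_tflip R
  obtain ⟨-, -, -, -, hΔ₂⟩ := hR
  rw [← comulRight_apply, ← map_tflip_comulRight, hΔ₂, map_mul, map_tflip_leg12,
    map_tflip_leg13] at h
  rw [leg23_apply, h, mul_assoc]

theorem yangBaxter_tflip (hR : IsUniversalRMatrix k H R Rinv) :
    leg12 k H (tflip k H R) * leg13 k H (tflip k H R) * leg23 k H (tflip k H R)
      = leg23 k H (tflip k H R) * leg13 k H (tflip k H R) * leg12 k H (tflip k H R) := by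
  simpa only [map_mul, legReverse_leg12, legReverse_leg13, legReverse_leg23]
    using congrArg legReverse hR.yangBaxter

theorem tflip_leg13_tflip_leg23_leg12 (hR : IsUniversalRMatrix k H R Rinv) :
    leg13 k H (tflip k H R) * leg23 k H (tflip k H R) * leg12 k H R
      = leg12 k H R * leg23 k H (tflip k H R) * leg13 k H (tflip k H R) := by
  simpa only [map_mul, legReverse_leg12, legReverse_leg13, legReverse_leg23, tflip_tflip]
    using congrArg legReverse hR.leg13_leg12_tflip_leg23

theorem reflection_legs (hR : IsUniversalRMatrix k H R Rinv) :
    leg12 k H (R * tflip k H R) * leg23 k H R * leg13 k H (R * tflip k H R)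
        * leg23 k H (tflip k H R)
      = leg23 k H R * leg13 k H (R * tflip k H R) * leg23 k H (tflip k H R)
        * leg12 k H (R * tflip k H R) := by
  simp only [map_mul]
  exact reflection_of_exchange hR.yangBaxter hR.tflip_leg13_tflip_leg23_leg12
    hR.leg13_leg23_tflip_leg12 hR.yangBaxter_tflip

end IsUniversalRMatrix

theorem reflection_equation_for_f_R_R21
    (R Rinv : H ⊗[k] H) (hR : IsUniversalRMatrix k H R Rinv)
    (f : H →ₐ[k] k)
    (K : H)
    (hKdef : K = dualTensorId k H f.toLinearMap (R * tflip k H R)) :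
    (K ⊗ₜ[k] (1 : H)) * R * ((1 : H) ⊗ₜ[k] K) * tflip k H R
      = R * ((1 : H) ⊗ₜ[k] K) * tflip k H R * (K ⊗ₜ[k] (1 : H)) := by
  have hK : charTensorId f (R * tflip k H R) = K := by
    rw [hKdef, dualTensorId_eq_charTensorId]
  simpa only [map_mul (charTensorId (B := H ⊗[k] H) f), charTensorId_leg12, charTensorId_leg13,
    charTensorId_leg23, hK] using congrArg (charTensorId f) hR.reflection_legs
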